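/- For every strictly positive surreal number x, the map z ↦ x ⨰ z is a (<, ⊏)-isomorphism from No onto its image x ⨰ No; in particular x ⨰ No is a surreal substructure. -/

import Mathlib

open Ordinal

attribute [local instance] Classical.propDecidable

/-- A surreal number presented as a sign sequence: a map from an ordinal (its
length) to `{-1, +1}`, extended by `0` beyond its length. -/
structure SSurreal : Type 1 where
  length : Ordinal.{0}
  sign : Ordinal → ℤ
  sign_mem : ∀ α, α < length → sign α = 1 ∨ sign α = -1
  sign_zero : ∀ α, ¬ α < length → sign α = 0

namespace SSurreal

/-- Simplicity: `x ⊑ y`, i.e. `x` is an initial segment of `y`. -/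
def sle (x y : SSurreal) : Prop := ∀ α, α < x.length → x.sign α = y.sign α

/-- Strict simplicity `x ⊏ y`. -/
def slt (x y : SSurreal) : Prop := sle x y ∧ x ≠ y

/-- The (lexicographic, Conway) order on sign sequences. -/
def lt (x y : SSurreal) : Prop :=
  ∃ α, (∀ β, β < α → x.sign β = y.sign β) ∧ x.sign α < y.sign α

/-- The empty sign sequence, i.e. the surreal number `0`. -/
noncomputable def zero : SSurreal :=
  ⟨0, fun _ => 0, fun α h => absurd h (not_lt_of_ge (zero_le (a := α))), fun _ _ => rfl⟩

/-- The ordinal `o` viewed as the constant `+1` sign sequence of length `o`. -/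
noncomputable def ofOrdinal (o : Ordinal) : SSurreal :=
  ⟨o, fun α => if α < o then 1 else 0, fun α h => Or.inl (if_pos h), fun α h => if_neg h⟩

/-- The surreal number `1`. -/
noncomputable def one : SSurreal := ofOrdinal 1

/-- The surreal number `-1`. -/
noncomputable def negOne : SSurreal :=
  ⟨1, fun α => if α < 1 then -1 else 0, fun α h => Or.inr (if_pos h), fun α h => if_neg h⟩

/-- Negation: flip every sign. -/
noncomputable def neg (x : SSurreal) : SSurreal :=
  ⟨x.length, fun α => - x.sign α,
    fun α h => by rcases x.sign_mem α h with h' | h' <;> simp [h'],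
    fun α h => by simp [x.sign_zero α h]⟩

/-- Concatenation `x ∔ y` of sign sequences. -/
noncomputable def concat (x y : SSurreal) : SSurreal where
  length := x.length + y.length
  sign α := if α < x.length then x.sign α else y.sign (α - x.length)
  sign_mem := by
    intro α h
    by_cases hx : α < x.length
    · rw [if_pos hx]; exact x.sign_mem α hx
    · rw [if_neg hx]
      refine y.sign_mem _ ?_
      have hle : x.length ≤ α := le_of_not_gt hx
      have := Ordinal.sub_lt_of_le hle (c := y.length)
      exact this.mpr h
  sign_zero := by
    intro α h
    have hx : ¬ α < x.length := fun hx =>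
      h (hx.trans_le le_self_add)
    rw [if_neg hx]
    refine y.sign_zero _ ?_
    intro hy
    exact h ((Ordinal.sub_lt_of_le (le_of_not_gt hx)).mp hy)

/-- The concatenation product `x ⨰ y` of sign sequences. -/
noncomputable def mul (x y : SSurreal) : SSurreal where
  length := x.length * y.length
  sign γ := if γ < x.length * y.length then y.sign (γ / x.length) * x.sign (γ % x.length) else 0
  sign_mem := by
    intro γ h
    rw [if_pos h]
    have hx0 : x.length ≠ 0 := by
      intro h0; rw [h0, zero_mul] at h; exact (not_lt_of_ge (zero_le (a := γ))) h
    have h1 : γ / x.length < y.length := by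
      rwa [Ordinal.div_lt hx0]
    have h2 : γ % x.length < x.length := Ordinal.mod_lt γ hx0
    rcases y.sign_mem _ h1 with hy | hy <;> rcases x.sign_mem _ h2 with hx | hx <;>
      simp [hy, hx]
  sign_zero := fun γ h => if_neg h

/-- `s` is the supremum of `C` with respect to simplicity. -/
def IsSimpSup (C : Set SSurreal) (s : SSurreal) : Prop :=
  (∀ x ∈ C, sle x s) ∧ ∀ t, (∀ x ∈ C, sle x t) → sle s t

/-- The supremum of a ⊏-chain of sign sequences (their union), when it
exists; junk value `zero` otherwise. -/
noncomputable def chainSup (C : Set SSurreal) : SSurreal :=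
  if h : ∃ s, IsSimpSup C s then h.choose else zero

/-- Transfinite concatenation `[α, f] = ∔_{γ<α} f(γ)`. -/
noncomputable def concatSum (α : Ordinal) (f : Ordinal → SSurreal) : SSurreal :=
  Ordinal.limitRecOn α zero (fun β ih => concat ih (f β))
    (fun γ _ ih => chainSup (Set.range fun p : Set.Iio γ => ih p.1 p.2))

/-- Restriction of `z` to an initial segment of length (at most) `β`. -/
noncomputable def trunc (z : SSurreal) (β : Ordinal) : SSurreal where
  length := min β z.length
  sign α := if α < min β z.length then z.sign α else 0
  sign_mem := fun α h => by
    rw [if_pos h]; exact z.sign_mem α (h.trans_le (min_le_right _ _))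
  sign_zero := fun α h => if_neg h

/-- The number of `+1` signs occurring in `s` strictly below `γ`. -/
noncomputable def countPlus (s : Ordinal → ℤ) (γ : Ordinal) : Ordinal :=
  Ordinal.limitRecOn γ 0 (fun β ih => if s β = 1 then ih + 1 else ih)
    (fun γ' _ ih => ⨆ β : Set.Iio γ', ih β.1 β.2)

/-- `τ_u`: the ordinal number of `+1` signs in the sign sequence of `u`. -/
noncomputable def tau (u : SSurreal) : Ordinal := countPlus u.sign u.length

end SSurreal


/-!
The sign of `x ⨰ z` at `ℓ(x)·α ∔ β` is `z[α]·x[β]`. When `x > 0` its first sign is `+`, so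
`x ⨰ z` carries the sign sequence of `z` along the positions `ℓ(x)·α`, while every sign of
`x ⨰ z` depends only on the sign of `z` at the block it lies in. Hence the first position where
`x ⨰ z` and `x ⨰ w` differ is `ℓ(x)·α` for the first position `α` where `z` and `w` differ, and
initial segments of `z` correspond to initial segments of `x ⨰ z`.
-/

namespace SSurreal

lemma ext_of_length_eq {z w : SSurreal} (hl : z.length = w.length)
    (hs : ∀ α, z.sign α = w.sign α) : z = w := by
  cases z; cases w
  simp only [mk.injEq] at *
  exact ⟨hl, funext hs⟩

lemma lt_length_of_sign_ne_zero {x : SSurreal} {α : Ordinal} (h : x.sign α ≠ 0) :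
    α < x.length := by
  by_contra hα
  exact h (x.sign_zero α hα)

lemma sign_zero_eq_one_of_zero_lt {x : SSurreal} (hx : lt zero x) : x.sign 0 = 1 := by
  obtain ⟨α, hagree, hα⟩ := hx
  have hzero : ∀ β, zero.sign β = 0 := fun _ => rfl
  rw [hzero] at hα
  have hαlen : α < x.length := lt_length_of_sign_ne_zero hα.ne'
  obtain rfl : α = 0 := by
    by_contra hne
    have hsign0 := hagree 0 (pos_iff_ne_zero.2 hne)
    rw [hzero] at hsign0
    rcases x.sign_mem 0 ((zero_le (a := α)).trans_lt hαlen) with h | h <;> omega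
  rcases x.sign_mem 0 hαlen with h | h <;> omega

section MulLeft

variable {x : SSurreal}

lemma length_ne_zero_of_sign_zero_eq_one (hx : x.sign 0 = 1) : x.length ≠ 0 :=
  (lt_length_of_sign_ne_zero (α := 0) (by omega)).ne'

lemma mul_sign (hL : x.length ≠ 0) (z : SSurreal) (γ : Ordinal) :
    (mul x z).sign γ = z.sign (γ / x.length) * x.sign (γ % x.length) := by
  change (if γ < x.length * z.length then _ else (0 : ℤ)) = _
  split_ifs with h
  · rfl
  · rw [z.sign_zero _ (by rwa [← Ordinal.lt_mul_iff_div_lt hL]), zero_mul]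

lemma mul_sign_eq_of_sign_div_eq (hL : x.length ≠ 0) {z w : SSurreal} {γ : Ordinal}
    (h : z.sign (γ / x.length) = w.sign (γ / x.length)) :
    (mul x z).sign γ = (mul x w).sign γ := by
  rw [mul_sign hL, mul_sign hL, h]

lemma mul_sign_length_mul (hx : x.sign 0 = 1) (z : SSurreal) (α : Ordinal) :
    (mul x z).sign (x.length * α) = z.sign α := by
  have hL := length_ne_zero_of_sign_zero_eq_one hx
  rw [mul_sign hL, Ordinal.mul_div_cancel _ hL, Ordinal.mul_mod, hx, mul_one]

lemma lt_mul_left_of_lt (hx : x.sign 0 = 1) {z w : SSurreal} (h : lt z w) :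
    lt (mul x z) (mul x w) := by
  have hL := length_ne_zero_of_sign_zero_eq_one hx
  obtain ⟨α, hagree, hα⟩ := h
  refine ⟨x.length * α, fun γ hγ => mul_sign_eq_of_sign_div_eq hL (hagree _ ?_), ?_⟩
  · rwa [← Ordinal.lt_mul_iff_div_lt hL]
  · rwa [mul_sign_length_mul hx, mul_sign_length_mul hx]

lemma lt_of_lt_mul_left (hx : x.sign 0 = 1) {z w : SSurreal} (h : lt (mul x z) (mul x w)) :
    lt z w := by
  have hL := length_ne_zero_of_sign_zero_eq_one hx
  obtain ⟨γ, hagree, hγ⟩ := h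
  have hagree' : ∀ α, x.length * α < γ → z.sign α = w.sign α := fun α hα => by
    rw [← mul_sign_length_mul hx z, ← mul_sign_length_mul hx w, hagree _ hα]
  -- `γ` is a block start `ℓ(x)·α`: otherwise `z` and `w` agree on the block of `γ`.
  obtain ⟨α, rfl⟩ : ∃ α, γ = x.length * α := by
    refine ⟨γ / x.length, ((Ordinal.mul_div_le γ x.length).eq_or_lt.resolve_right ?_).symm⟩
    exact fun hlt => hγ.ne (mul_sign_eq_of_sign_div_eq hL (hagree' _ hlt))
  refine ⟨α, fun β hβ => hagree' β ?_, ?_⟩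
  · exact (mul_lt_mul_iff_right₀ (pos_iff_ne_zero.2 hL)).2 hβ
  · rwa [mul_sign_length_mul hx, mul_sign_length_mul hx] at hγ

lemma mul_left_injective (hx : x.sign 0 = 1) : Function.Injective (mul x) := by
  have hL := length_ne_zero_of_sign_zero_eq_one hx
  intro z w h
  refine ext_of_length_eq ?_ fun α => ?_
  · rw [← Ordinal.mul_div_cancel z.length hL, ← Ordinal.mul_div_cancel w.length hL]
    exact congrArg (· / x.length) (congrArg length h)
  · rw [← mul_sign_length_mul hx z, ← mul_sign_length_mul hx w, h]

lemma sle_mul_left_of_sle {z w : SSurreal} (h : sle z w) : sle (mul x z) (mul x w) := by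
  intro γ hγ
  have hL : x.length ≠ 0 := by
    rintro hL
    simp [mul, hL] at hγ
  exact mul_sign_eq_of_sign_div_eq hL (h _ ((Ordinal.lt_mul_iff_div_lt hL).1 hγ))

lemma sle_of_sle_mul_left (hx : x.sign 0 = 1) {z w : SSurreal} (h : sle (mul x z) (mul x w)) :
    sle z w := by
  have hL := length_ne_zero_of_sign_zero_eq_one hx
  intro α hα
  rw [← mul_sign_length_mul hx z, ← mul_sign_length_mul hx w]
  exact h _ ((mul_lt_mul_iff_right₀ (pos_iff_ne_zero.2 hL)).2 hα)

end MulLeft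

end SSurreal

open SSurreal in
/-- for `x > 0`, the map `z ↦ x ⨰ z` is a `(<, ⊏)`-isomorphism
from `No` onto its image `x ⨰ No`; in particular `x ⨰ No` is a surreal
substructure. -/
theorem mul_left_is_iso_onto_image (x : SSurreal) (hx : lt zero x) :
    (∀ z w : SSurreal, lt z w ↔ lt (mul x z) (mul x w)) ∧
    (∀ z w : SSurreal, slt z w ↔ slt (mul x z) (mul x w)) := by
  have hsign := sign_zero_eq_one_of_zero_lt hx
  refine ⟨fun z w => ⟨lt_mul_left_of_lt hsign, lt_of_lt_mul_left hsign⟩, fun z w => ?_⟩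
  exact ⟨fun ⟨hle, hne⟩ => ⟨sle_mul_left_of_sle hle, (mul_left_injective hsign).ne hne⟩,
    fun ⟨hle, hne⟩ => ⟨sle_of_sle_mul_left hsign hle, fun h => hne (congrArg (mul x) h)⟩⟩
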